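/- There is a unique k-automorphism ρ of L with ρ(x) = −1/x and ρ(y) = y/x⁴; ρ has order 2, its fixed field in L is k(w, v) where w = x − 1/x and v = y/x², and v² = w⁴ + 4w² + 3, i.e., the fixed field is the function field of the genus-1 curve v² = w⁴ + 4w² + 3. -/

import Mathlib

/-!
Write `K = k(x)` and `c = x⁸ + x⁴ + 1`. In characteristic `≠ 2, 3` the polynomial `c` is separable,
hence not a square in `K`, so `L = K[y]/(y² - c)`. The substitution `x ↦ -1/x` maps `c` to `c/x⁸`,
the square of `y/x⁴`; so it extends to `L` with `y ↦ y/x⁴`. Since `L = k(x, y)`, this extension is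
unique, and it is an involution because its square fixes `x` and `y`. The involution fixes
`w = x - 1/x` and `v = y/x²`, and `L = k(w, v)(x)` with `x² - w x - 1 = 0`; comparing degrees,
`[L : k(w, v)] ≤ 2 = [L : L^ρ]` forces `L^ρ = k(w, v)`.
-/

open Polynomial IntermediateField

theorem not_isSquare_algebraMap_of_squarefree {R K : Type*} [CommRing R] [IsDomain R]
    [IsIntegrallyClosed R] [Field K] [Algebra R K] [IsFractionRing R K] {a : R}
    (hsq : Squarefree a) (hu : ¬IsUnit a) : ¬IsSquare (algebraMap R K a) := by
  rintro ⟨b, hb⟩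
  obtain ⟨s, rfl⟩ := IsIntegrallyClosed.exists_algebraMap_eq_of_isIntegral_pow (R := R) (K := K)
    two_pos (by rw [sq, ← hb]; exact isIntegral_algebraMap)
  have hs : s * s = a := IsFractionRing.injective R K (by rw [map_mul, hb])
  exact hu (hs ▸ (hsq s hs.dvd).mul (hsq s hs.dvd))

theorem squarefree_X_pow_eight_add_X_pow_four_add_one {k : Type*} [Field k]
    (h2 : (2 : k) ≠ 0) (h3 : (3 : k) ≠ 0) : Squarefree (X ^ 8 + X ^ 4 + 1 : k[X]) := by
  refine Separable.squarefree ?_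
  have h24 : C (24 : k)⁻¹ * 24 = 1 := by
    rw [← C_ofNat, ← C_mul, inv_mul_cancel₀ (by
      rw [show (24 : k) = 2 ^ 3 * 3 by norm_num]; exact mul_ne_zero (pow_ne_zero 3 h2) h3), C_1]
  -- Bezout: `(24 - 16X⁴) f + (2X⁵ - 2X) f' = 24`.
  refine ⟨C (24 : k)⁻¹ * (24 - 16 * X ^ 4), C (24 : k)⁻¹ * (2 * X ^ 5 - 2 * X), ?_⟩
  have hder : derivative (X ^ 8 + X ^ 4 + 1 : k[X]) = 8 * X ^ 7 + 4 * X ^ 3 := by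
    simp only [derivative_add, derivative_X_pow, derivative_one, add_zero, map_natCast]
    norm_num
  rw [hder]
  linear_combination h24

theorem not_isUnit_X_pow_eight_add_X_pow_four_add_one {k : Type*} [Field k] :
    ¬IsUnit (X ^ 8 + X ^ 4 + 1 : k[X]) := by
  intro h
  have := natDegree_eq_zero_of_isUnit h
  have h8 : (X ^ 8 + X ^ 4 + 1 : k[X]).natDegree = 8 := by compute_degree!
  omega

theorem RatFunc.not_isSquare_X_pow_eight_add_X_pow_four_add_one {k : Type*} [Field k]
    (h2 : (2 : k) ≠ 0) (h3 : (3 : k) ≠ 0) :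
    ¬IsSquare (RatFunc.X ^ 8 + RatFunc.X ^ 4 + 1 : RatFunc k) := by
  simpa using not_isSquare_algebraMap_of_squarefree (K := RatFunc k)
    (squarefree_X_pow_eight_add_X_pow_four_add_one h2 h3)
    not_isUnit_X_pow_eight_add_X_pow_four_add_one

theorem minpoly_eq_X_sq_sub_C {K L : Type*} [Field K] [Field L] [Algebra K L] {y : L} {c : K}
    (hc : ¬IsSquare c) (hy : y ^ 2 = algebraMap K L c) : minpoly K y = X ^ 2 - C c :=
  (minpoly.eq_of_irreducible_of_monic
    (X_pow_sub_C_irreducible_of_prime Nat.prime_two fun b hb => hc ⟨b, by rw [← hb, sq]⟩)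
    (by simp [hy]) (monic_X_pow_sub_C c two_ne_zero)).symm

theorem exists_algHom_extend_of_adjoin_simple_eq_top {k K L M : Type*} [CommRing k] [Field K]
    [Field L] [Field M] [Algebra k K] [Algebra k L] [Algebra k M] [Algebra K L]
    [IsScalarTower k K L] {y : L} (hy : IsIntegral K y) (hgen : K⟮y⟯ = ⊤) (σ : K →ₐ[k] M) {z : M}
    (hz : (minpoly K y).eval₂ σ z = 0) :
    ∃ f : L →ₐ[k] M, (∀ a, f (algebraMap K L a) = σ a) ∧ f y = z := by
  let e : AdjoinRoot (minpoly K y) ≃ₐ[K] L :=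
    (adjoinRootEquivAdjoin K hy).trans ((equivOfEq hgen).trans topEquiv)
  have he : e (AdjoinRoot.root _) = y := by
    simp [e, adjoinRootEquivAdjoin_apply_root]
  refine ⟨(AdjoinRoot.liftAlgHom _ σ z hz).comp (e.symm.restrictScalars k).toAlgHom,
    fun a => ?_, ?_⟩
  · simp [AdjoinRoot.algebraMap_eq]
  · simp [← he]

theorem mem_fixedField_zpowers_iff {F E : Type*} [Field F] [Field E] [Algebra F E]
    {σ : E ≃ₐ[F] E} {z : E} : z ∈ fixedField (Subgroup.zpowers σ) ↔ σ z = z :=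
  ⟨fun h => h ⟨σ, Subgroup.mem_zpowers σ⟩,
    fun h f => (Subgroup.zpowers_le (H := MulAction.stabilizer (E ≃ₐ[F] E) z)).2
      (MulAction.mem_stabilizer_iff.2 h) f.2⟩

theorem fixedField_eq_of_le_of_finrank_le {F E : Type*} [Field F] [Field E] [Algebra F E]
    (H : Subgroup (E ≃ₐ[F] E)) [Finite H] {M : IntermediateField F E} [FiniteDimensional M E]
    (hle : M ≤ fixedField H) (hrank : Module.finrank M E ≤ Nat.card H) : fixedField H = M := by
  have := Fintype.ofFinite H
  refine (eq_of_le_of_finrank_le' hle ?_).symm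
  exact hrank.trans_eq (Nat.card_eq_fintype_card.trans (FixedPoints.finrank_eq_card H E).symm)

theorem finiteDimensional_of_adjoin_simple_eq_top {K L : Type*} [Field K] [Field L] [Algebra K L]
    {x : L} (hx : IsIntegral K x) (hgen : K⟮x⟯ = ⊤) : FiniteDimensional K L := by
  have := adjoin.finiteDimensional hx
  rw [hgen] at this
  exact Module.Finite.equiv topEquiv.toLinearEquiv

theorem finrank_le_natDegree_of_adjoin_simple_eq_top {K L : Type*} [Field K] [Field L]
    [Algebra K L] {x : L} (hgen : K⟮x⟯ = ⊤) {p : K[X]} (hp : p ≠ 0) (hpx : aeval x p = 0) :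
    Module.finrank K L ≤ p.natDegree := by
  have hx : IsIntegral K x := IsAlgebraic.isIntegral ⟨p, hp, hpx⟩
  rw [← finrank_top', ← hgen, adjoin.finrank hx]
  exact natDegree_le_of_dvd (minpoly.dvd K x hpx) hp

theorem CharP.natCast_ne_zero_of_pos_of_lt {R : Type*} [AddMonoidWithOne R] (p : ℕ) [CharP R p]
    {n : ℕ} (hn0 : 0 < n) (hnp : n < p) : (n : R) ≠ 0 := fun h =>
  absurd (Nat.le_of_dvd hn0 ((CharP.cast_eq_zero_iff R p n).1 h)) (not_le.2 hnp)

theorem Transcendental.neg_inv {K L : Type*} [Field K] [Field L] [Algebra K L] {x : L}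
    (hx : Transcendental K x) : Transcendental K (-x⁻¹) := fun h =>
  hx (IsAlgebraic.inv_iff.1 (by simpa using h.isIntegral.neg.isAlgebraic))


section Hyperelliptic

variable {k L : Type*} [Field k] [Field L] [Algebra k L] [Algebra (RatFunc k) L]
  [IsScalarTower k (RatFunc k) L] {x y : L}

theorem transcendental_of_eq_algebraMap_X (hx : x = algebraMap (RatFunc k) L RatFunc.X) :
    Transcendental k x :=
  hx ▸ (transcendental_algebraMap_iff (algebraMap (RatFunc k) L).injective).2
    RatFunc.transcendental_X

theorem ne_zero_of_eq_algebraMap_X (hx : x = algebraMap (RatFunc k) L RatFunc.X) : x ≠ 0 := by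
  rintro rfl
  exact transcendental_of_eq_algebraMap_X hx isAlgebraic_zero

theorem adjoin_pair_eq_top (hx : x = algebraMap (RatFunc k) L RatFunc.X)
    (hgen : (RatFunc k)⟮y⟯ = ⊤) : k⟮x, y⟯ = ⊤ := by
  have hrange : Set.range (algebraMap (RatFunc k) L) ⊆ k⟮x, y⟯ := by
    rintro _ ⟨a, rfl⟩
    have ha : algebraMap (RatFunc k) L a ∈ k⟮x⟯ := by
      rw [hx, ← Set.image_singleton]
      change _ ∈ adjoin k (IsScalarTower.toAlgHom k (RatFunc k) L '' _)
      rw [← adjoin_map k _ (IsScalarTower.toAlgHom k (RatFunc k) L),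
        RatFunc.adjoin_X]
      exact ⟨a, mem_top, rfl⟩
    exact adjoin.mono k _ _ (Set.singleton_subset_iff.2 (Set.mem_insert x {y})) ha
  refine eq_top_iff.2 fun z _ => ?_
  have hz : z ∈ ((RatFunc k)⟮y⟯).toSubfield := by rw [hgen]; trivial
  rw [adjoin_toSubfield] at hz
  exact Subfield.closure_le.2 (Set.union_subset hrange
    (Set.singleton_subset_iff.2 (subset_adjoin k _ (Set.mem_insert_of_mem x rfl)))) hz

theorem algHom_ext_of_apply_pair {M : Type*} [Field M] [Algebra k M]
    (hx : x = algebraMap (RatFunc k) L RatFunc.X) (hgen : (RatFunc k)⟮y⟯ = ⊤)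
    {f g : L →ₐ[k] M} (hfx : f x = g x) (hfy : f y = g y) : f = g := by
  let E : IntermediateField k L := (AlgHom.equalizer f g).toIntermediateField
    fun z (hz : f z = g z) => show f z⁻¹ = g z⁻¹ by rw [map_inv₀, map_inv₀, hz]
  have hE : k⟮x, y⟯ ≤ E := adjoin_le_iff.2 (by rintro _ (rfl | rfl) <;> assumption)
  ext z
  exact hE (adjoin_pair_eq_top hx hgen ▸ mem_top : z ∈ k⟮x, y⟯)

theorem comp_self_eq_id_of_apply (hx : x = algebraMap (RatFunc k) L RatFunc.X)
    (hgen : (RatFunc k)⟮y⟯ = ⊤) {f : L →ₐ[k] L} (hfx : f x = -x⁻¹) (hfy : f y = y / x ^ 4) :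
    f.comp f = AlgHom.id k L := by
  have hx0 := ne_zero_of_eq_algebraMap_X hx
  refine algHom_ext_of_apply_pair hx hgen ?_ ?_
  · simp [hfx]
  · simp only [AlgHom.coe_comp, Function.comp_apply, hfy, map_div₀, map_pow, hfx, AlgHom.coe_id,
      id_eq]
    field_simp

theorem exists_algHom_apply_eq_neg_inv (h2 : (2 : k) ≠ 0) (h3 : (3 : k) ≠ 0)
    (hx : x = algebraMap (RatFunc k) L RatFunc.X) (hy : y ^ 2 = x ^ 8 + x ^ 4 + 1)
    (hgen : (RatFunc k)⟮y⟯ = ⊤) : ∃ f : L →ₐ[k] L, f x = -x⁻¹ ∧ f y = y / x ^ 4 := by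
  have hx0 := ne_zero_of_eq_algebraMap_X hx
  set c : RatFunc k := RatFunc.X ^ 8 + RatFunc.X ^ 4 + 1
  have hyc : y ^ 2 = algebraMap (RatFunc k) L c := by simp [c, hy, hx]
  have ht := (transcendental_of_eq_algebraMap_X hx).neg_inv
  let σ : RatFunc k →ₐ[k] L :=
    (k⟮-x⁻¹⟯).val.comp (RatFunc.algEquivOfTranscendental _ ht).toAlgHom
  have hσ : σ RatFunc.X = -x⁻¹ := by simp [σ, RatFunc.algEquivOfTranscendental_X]
  obtain ⟨f, hf, hfy⟩ := exists_algHom_extend_of_adjoin_simple_eq_top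
    (IsIntegral.of_pow two_pos (hyc ▸ isIntegral_algebraMap)) hgen σ (z := y / x ^ 4) (by
      rw [minpoly_eq_X_sq_sub_C
          (RatFunc.not_isSquare_X_pow_eight_add_X_pow_four_add_one h2 h3) hyc,
        eval₂_sub, eval₂_X_pow, eval₂_C, AlgHom.coe_toRingHom, map_add, map_add, map_pow,
        map_pow, map_one, hσ]
      field_simp
      linear_combination hy)
  exact ⟨f, by rw [← hσ, hx, hf], hfy⟩

theorem orderOf_eq_two_of_apply (hx : x = algebraMap (RatFunc k) L RatFunc.X)
    (hgen : (RatFunc k)⟮y⟯ = ⊤) {ρ : L ≃ₐ[k] L} (hρx : ρ x = -x⁻¹) (hρy : ρ y = y / x ^ 4) :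
    orderOf ρ = 2 := by
  refine orderOf_eq_prime (AlgEquiv.ext fun z =>
    AlgHom.congr_fun (comp_self_eq_id_of_apply hx hgen (f := ρ.toAlgHom) hρx hρy) z) ?_
  rintro rfl
  rw [AlgEquiv.one_apply] at hρx
  have hx0 := ne_zero_of_eq_algebraMap_X hx
  have hx2 : x ^ 2 = algebraMap k L (-1) := by
    rw [map_neg, map_one, sq]
    nth_rw 2 [hρx]
    rw [mul_neg, mul_inv_cancel₀ hx0]
  exact (transcendental_of_eq_algebraMap_X hx).pow two_pos (hx2 ▸ isAlgebraic_algebraMap _)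

theorem adjoin_adjoin_sub_inv_div_sq_eq_top (hx : x = algebraMap (RatFunc k) L RatFunc.X)
    (hgen : (RatFunc k)⟮y⟯ = ⊤) : (k⟮x - x⁻¹, y / x ^ 2⟯)⟮x⟯ = ⊤ := by
  have hx0 := ne_zero_of_eq_algebraMap_X hx
  rw [← restrictScalars_eq_top_iff (K := k), restrictScalars_adjoin, eq_top_iff,
    ← adjoin_pair_eq_top hx hgen, adjoin_le_iff]
  have hxM : x ∈ adjoin k (k⟮x - x⁻¹, y / x ^ 2⟯ ∪ {x} : Set L) :=
    subset_adjoin k _ (Or.inr rfl)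
  refine Set.insert_subset_iff.2 ⟨hxM, Set.singleton_subset_iff.2 ?_⟩
  have hyM : y / x ^ 2 * x ^ 2 ∈ adjoin k (k⟮x - x⁻¹, y / x ^ 2⟯ ∪ {x} : Set L) :=
    mul_mem (subset_adjoin k _ (Or.inl (subset_adjoin k _ (Or.inr rfl)))) (pow_mem hxM 2)
  rwa [div_mul_cancel₀ y (pow_ne_zero 2 hx0)] at hyM

theorem fixedField_zpowers_eq_adjoin (hx : x = algebraMap (RatFunc k) L RatFunc.X)
    (hgen : (RatFunc k)⟮y⟯ = ⊤) {ρ : L ≃ₐ[k] L} (hρx : ρ x = -x⁻¹) (hρy : ρ y = y / x ^ 4) :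
    fixedField (Subgroup.zpowers ρ) = k⟮x - x⁻¹, y / x ^ 2⟯ := by
  have hx0 := ne_zero_of_eq_algebraMap_X hx
  have hρ := orderOf_eq_two_of_apply hx hgen hρx hρy
  set M := k⟮x - x⁻¹, y / x ^ 2⟯
  have hMx := adjoin_adjoin_sub_inv_div_sq_eq_top hx hgen
  let q : M[X] := X ^ 2 - C ⟨x - x⁻¹, subset_adjoin k _ (Or.inl rfl)⟩ * X - 1
  have hq : q.Monic := by unfold q; monicity!
  have hqx : aeval x q = 0 := by
    simp only [q, map_sub, map_mul, map_pow, aeval_X, aeval_C, map_one,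
      IntermediateField.algebraMap_apply]
    field_simp
    ring
  have := finiteDimensional_of_adjoin_simple_eq_top ⟨q, hq, hqx⟩ hMx
  have : Finite (Subgroup.zpowers ρ) := Nat.finite_of_card_ne_zero (by simp [hρ])
  refine fixedField_eq_of_le_of_finrank_le _ (adjoin_le_iff.2 ?_) ?_
  · rintro _ (rfl | rfl) <;> rw [SetLike.mem_coe, mem_fixedField_zpowers_iff]
    · simp only [map_sub, map_inv₀, hρx, inv_neg, inv_inv]
      ring
    · simp only [map_div₀, hρy, map_pow, hρx, even_two, Even.neg_pow, inv_pow, div_inv_eq_mul]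
      field_simp
  · rw [Nat.card_zpowers, hρ]
    refine (finrank_le_natDegree_of_adjoin_simple_eq_top hMx hq.ne_zero hqx).trans ?_
    unfold q; compute_degree

end Hyperelliptic

theorem stmt_9_general
    (k : Type*) [Field k]
    (p : ℕ) (hp3 : 3 < p) [CharP k p]
    (L : Type*) [Field L] [Algebra k L] [Algebra (RatFunc k) L]
    [IsScalarTower k (RatFunc k) L]
    (x y : L) (hx : x = algebraMap (RatFunc k) L RatFunc.X)
    (hy : y ^ 2 = x ^ 8 + x ^ 4 + 1)
    (hgen : IntermediateField.adjoin (RatFunc k) {y} = ⊤) :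
    (∃! ρ : L ≃ₐ[k] L, ρ x = -x⁻¹ ∧ ρ y = y / x ^ 4) ∧
    (∀ ρ : L ≃ₐ[k] L, ρ x = -x⁻¹ → ρ y = y / x ^ 4 →
      orderOf ρ = 2 ∧
      IntermediateField.fixedField (Subgroup.zpowers ρ) =
        IntermediateField.adjoin k {x - x⁻¹, y / x ^ 2} ∧
      (y / x ^ 2) ^ 2 = (x - x⁻¹) ^ 4 + 4 * (x - x⁻¹) ^ 2 + 3) := by
  have h2 : (2 : k) ≠ 0 := by
    exact_mod_cast CharP.natCast_ne_zero_of_pos_of_lt p two_pos (by omega)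
  have h3 : (3 : k) ≠ 0 := by
    exact_mod_cast CharP.natCast_ne_zero_of_pos_of_lt p three_pos hp3
  obtain ⟨f, hfx, hfy⟩ := exists_algHom_apply_eq_neg_inv h2 h3 hx hy hgen
  have hff := comp_self_eq_id_of_apply hx hgen hfx hfy
  refine ⟨⟨AlgEquiv.ofAlgHom f f hff hff, ⟨hfx, hfy⟩, fun ρ hρ => ?_⟩,
    fun ρ hρx hρy => ⟨orderOf_eq_two_of_apply hx hgen hρx hρy,
      fixedField_zpowers_eq_adjoin hx hgen hρx hρy, ?_⟩⟩
  · exact AlgEquiv.coe_toAlgHom_injective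
      (algHom_ext_of_apply_pair hx hgen (hρ.1.trans hfx.symm) (hρ.2.trans hfy.symm))
  · have hx0 := ne_zero_of_eq_algebraMap_X hx
    field_simp
    linear_combination hy

/-- Let `L = k(x)(y)` be the function field of the genus-3 hyperelliptic
curve `y² = x⁸ + x⁴ + 1` (char `k = p > 3`). There is a unique `k`-automorphism `ρ` of
`L` with `ρ(x) = −1/x` and `ρ(y) = y/x⁴`; `ρ` has order 2, its fixed field in `L` is
`k(w, v)` where `w = x − 1/x` and `v = y/x²`, and `v² = w⁴ + 4w² + 3`. -/
theorem stmt_9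
    (k : Type*) [Field k] [IsAlgClosed k]
    (p : ℕ) (hp : p.Prime) (hp3 : 3 < p) [CharP k p]
    (L : Type*) [Field L] [Algebra k L] [Algebra (RatFunc k) L]
    [IsScalarTower k (RatFunc k) L]
    (x y : L) (hx : x = algebraMap (RatFunc k) L RatFunc.X)
    (hy : y ^ 2 = x ^ 8 + x ^ 4 + 1)
    (hgen : IntermediateField.adjoin (RatFunc k) {y} = ⊤) :
    (∃! ρ : L ≃ₐ[k] L, ρ x = -x⁻¹ ∧ ρ y = y / x ^ 4) ∧
    (∀ ρ : L ≃ₐ[k] L, ρ x = -x⁻¹ → ρ y = y / x ^ 4 →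
      orderOf ρ = 2 ∧
      IntermediateField.fixedField (Subgroup.zpowers ρ) =
        IntermediateField.adjoin k {x - x⁻¹, y / x ^ 2} ∧
      (y / x ^ 2) ^ 2 = (x - x⁻¹) ^ 4 + 4 * (x - x⁻¹) ^ 2 + 3) :=
  stmt_9_general k p hp3 L x y hx hy hgen
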